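/- arXiv:1805.07232 — 2 statements merged into one kernel-verified Lean document; each statement's English description precedes it below -/
import Mathlib

section
/- For every vertex x of a finite connected graph G with δ-thin triangles, d_G(x, C(G)) + rad(G) − 4δ − 2 ≤ ecc_G(x) ≤ d_G(x, C(G)) + rad(G), where d_G(x, C(G)) = min{d_G(x,c) : c ∈ C(G)}. -/
open SimpleGraph

variable {V : Type*}

/-- Eccentricity of a vertex: the largest distance from `v` to any vertex. -/
noncomputable def ecc [Fintype V] (G : SimpleGraph V) (v : V) : ℕ :=
  Finset.univ.sup fun u => G.dist v u

/-- Radius: the minimum eccentricity. -/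
noncomputable def rad [Fintype V] (G : SimpleGraph V) : ℕ :=
  sInf (Set.range (ecc G))

/-- Diameter: the maximum eccentricity. -/
noncomputable def gdiam [Fintype V] (G : SimpleGraph V) : ℕ :=
  Finset.univ.sup fun v => ecc G v

/-- `G` has δ-thin triangles: for all vertices `x y z`, all geodesics `p1` from `x` to `y`
and `p2` from `x` to `z`, and all vertices `u ∈ p1`, `v ∈ p2` with
`d(x,u) = d(x,v) ≤ (y|z)_x`, one has `d(u,v) ≤ δ`.  The Gromov product condition
`d(x,u) ≤ (y|z)_x = (d(x,y) + d(x,z) - d(y,z))/2` is written additively in `ℕ`. -/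
def ThinTriangles (G : SimpleGraph V) (δ : ℝ) : Prop :=
  ∀ (x y z : V) (p1 : G.Walk x y) (p2 : G.Walk x z),
    p1.length = G.dist x y → p2.length = G.dist x z →
    ∀ u ∈ p1.support, ∀ v ∈ p2.support,
      G.dist x u = G.dist x v →
      2 * G.dist x u + G.dist y z ≤ G.dist x y + G.dist x z →
      (G.dist u v : ℝ) ≤ δ

/-- Distance from a vertex to the center of `G`. -/
noncomputable def distToCenter [Fintype V] (G : SimpleGraph V) (x : V) : ℕ :=
  sInf {n : ℕ | ∃ c : V, ecc G c = rad G ∧ G.dist x c = n}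

/- ### Auxiliary lemmas -/

private lemma dist_le_ecc [Fintype V] (G : SimpleGraph V) (v u : V) :
    G.dist v u ≤ ecc G v :=
  Finset.le_sup (Finset.mem_univ u)

private lemma exists_ecc [Fintype V] [Nonempty V] (G : SimpleGraph V) (v : V) :
    ∃ u, G.dist v u = ecc G v := by
  obtain ⟨u, -, hu⟩ :=
    Finset.exists_mem_eq_sup (Finset.univ : Finset V) Finset.univ_nonempty
      (fun u => G.dist v u)
  exact ⟨u, hu.symm⟩

private lemma rad_le_ecc [Fintype V] (G : SimpleGraph V) (v : V) :
    rad G ≤ ecc G v :=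
  Nat.sInf_le ⟨v, rfl⟩

private lemma exists_center [Fintype V] [Nonempty V] (G : SimpleGraph V) :
    ∃ c, ecc G c = rad G := by
  have : rad G ∈ Set.range (ecc G) :=
    Nat.sInf_mem (Set.range_nonempty (ecc G))
  exact this

private lemma ecc_le_dist_add [Fintype V] (G : SimpleGraph V) (hG : G.Connected)
    (v u : V) : ecc G v ≤ G.dist v u + ecc G u := by
  apply Finset.sup_le
  intro w _
  calc G.dist v w ≤ G.dist v u + G.dist u w := hG.dist_triangle
    _ ≤ G.dist v u + ecc G u := Nat.add_le_add_left (dist_le_ecc G u w) _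

/-- Distances to the interior vertices of a walk. -/
private lemma dist_getVert_le (G : SimpleGraph V) (hG : G.Connected) :
    ∀ {a b : V} (p : G.Walk a b) (i : ℕ),
      G.dist a (p.getVert i) ≤ i ∧ G.dist (p.getVert i) b ≤ p.length - i := by
  intro a b p
  induction p with
  | nil =>
    intro i
    simp [SimpleGraph.Walk.getVert, SimpleGraph.dist_self]
  | @cons a a' b h q ih =>
    intro i
    cases i with
    | zero =>
      constructor
      · simp
      · simpa using SimpleGraph.dist_le (SimpleGraph.Walk.cons h q)
    | succ n =>
      have h1 : G.dist a a' ≤ 1 := by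
        simpa using SimpleGraph.dist_le (SimpleGraph.Walk.cons h (SimpleGraph.Walk.nil))
      obtain ⟨ih1, ih2⟩ := ih n
      constructor
      · have htri : G.dist a (q.getVert n) ≤ G.dist a a' + G.dist a' (q.getVert n) :=
          hG.dist_triangle
        have : G.dist a ((SimpleGraph.Walk.cons h q).getVert (n+1))
            = G.dist a (q.getVert n) := rfl
        omega
      · have : G.dist ((SimpleGraph.Walk.cons h q).getVert (n+1)) b
            = G.dist (q.getVert n) b := rfl
        have hlen : (SimpleGraph.Walk.cons h q).length = q.length + 1 :=
          SimpleGraph.Walk.length_cons h q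
        omega

/-- On a geodesic, the `i`-th vertex is at distance exactly `i` from the start and
`length - i` from the end. -/
private lemma dist_getVert (G : SimpleGraph V) (hG : G.Connected) {a b : V}
    (p : G.Walk a b) (hp : p.length = G.dist a b) {i : ℕ} (hi : i ≤ p.length) :
    G.dist a (p.getVert i) = i ∧ G.dist (p.getVert i) b = p.length - i := by
  obtain ⟨h1, h2⟩ := dist_getVert_le G hG p i
  have htri : G.dist a b ≤ G.dist a (p.getVert i) + G.dist (p.getVert i) b :=
    hG.dist_triangle
  omega

private lemma getVert_mem_support' {G : SimpleGraph V} {a b : V} (p : G.Walk a b)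
    (i : ℕ) : p.getVert i ∈ p.support := by
  rw [SimpleGraph.Walk.mem_support_iff_exists_getVert]
  by_cases hi : i ≤ p.length
  · exact ⟨i, rfl, hi⟩
  · exact ⟨p.length, by rw [SimpleGraph.Walk.getVert_length,
      SimpleGraph.Walk.getVert_of_length_le p (le_of_not_ge hi)], le_refl _⟩

/-- The key consequence of thinness: for any geodesic `p` from `a` to `b`, its
"midpoint" `m = p.getVert (d(a,b)/2)` satisfies, for every vertex `v`, either
`d(m,v) ≤ d(a,v) - t + δ` or `d(m,v) ≤ d(b,v) - (D - t) + δ`. -/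
private lemma key_lemma (G : SimpleGraph V) (hG : G.Connected)
    (δ : ℝ) (hthin : ThinTriangles G δ) (a b : V) (p : G.Walk a b)
    (hp : p.length = G.dist a b) (v : V) :
    ((G.dist (p.getVert (G.dist a b / 2)) v : ℝ)
        ≤ (G.dist a v : ℝ) - (G.dist a b / 2 : ℕ) + δ) ∨
    ((G.dist (p.getVert (G.dist a b / 2)) v : ℝ)
        ≤ (G.dist b v : ℝ) - ((G.dist a b : ℕ) - G.dist a b / 2 : ℕ) + δ) := by
  set D := G.dist a b with hD
  set t := D / 2 with ht
  have htD : t ≤ D := Nat.div_le_self _ _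
  have htp : t ≤ p.length := by omega
  obtain ⟨hma, hmb⟩ := dist_getVert G hG p hp htp
  set m := p.getVert t with hm
  -- hma : dist a m = t, hmb : dist m b = p.length - t = D - t
  have hmb' : G.dist m b = D - t := by omega
  have htriangle : D ≤ G.dist a v + G.dist b v := by
    have := hG.dist_triangle (u := a) (v := v) (w := b)
    have hc : G.dist v b = G.dist b v := G.dist_comm
    omega
  by_cases hcase : 2 * t + G.dist b v ≤ D + G.dist a v
  · -- apex a
    left
    have htav : t ≤ G.dist a v := by omega
    obtain ⟨q, hq⟩ := (hG.preconnected a v).exists_walk_length_eq_dist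
    have htq : t ≤ q.length := by omega
    obtain ⟨hqa, hqv⟩ := dist_getVert G hG q hq htq
    have hthin' : (G.dist m (q.getVert t) : ℝ) ≤ δ := by
      apply hthin a b v p q hp hq m (getVert_mem_support' p t)
        (q.getVert t) (getVert_mem_support' q t)
      · rw [hma, hqa]
      · rw [hma]; omega
    have htri2 : G.dist m v ≤ G.dist m (q.getVert t) + G.dist (q.getVert t) v :=
      hG.dist_triangle
    have hqv' : G.dist (q.getVert t) v = G.dist a v - t := by omega
    have : (G.dist m v : ℝ) ≤ (G.dist m (q.getVert t) : ℝ) + ((G.dist a v : ℝ) - t) := by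
      push_cast
      have : (G.dist (q.getVert t) v : ℝ) = (G.dist a v : ℝ) - t := by
        rw [hqv']
        push_cast [Nat.cast_sub htav]
        ring
      calc (G.dist m v : ℝ) ≤ (G.dist m (q.getVert t) : ℝ) + (G.dist (q.getVert t) v : ℝ) := by
            exact_mod_cast htri2
        _ = (G.dist m (q.getVert t) : ℝ) + ((G.dist a v : ℝ) - t) := by rw [this]
    linarith
  · -- apex b
    right
    have hcase2 : 2 * (D - t) + G.dist a v ≤ D + G.dist b v := by omega
    have htbv : D - t ≤ G.dist b v := by omega
    obtain ⟨q, hq⟩ := (hG.preconnected b v).exists_walk_length_eq_dist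
    have htq : D - t ≤ q.length := by omega
    obtain ⟨hqb, hqv⟩ := dist_getVert G hG q hq htq
    -- m on p.reverse
    have hrev_len : p.reverse.length = G.dist b a := by
      rw [SimpleGraph.Walk.length_reverse, hp, G.dist_comm]
    have hbm : G.dist b m = D - t := by
      rw [G.dist_comm]; exact hmb'
    have hmem : m ∈ p.reverse.support := by
      rw [SimpleGraph.Walk.support_reverse, List.mem_reverse]
      exact getVert_mem_support' p t
    have hthin' : (G.dist m (q.getVert (D - t)) : ℝ) ≤ δ := by
      apply hthin b a v p.reverse q hrev_len hq m hmem
        (q.getVert (D - t)) (getVert_mem_support' q (D - t))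
      · rw [hbm, hqb]
      · rw [hbm, G.dist_comm (u := b) (v := a)]
        omega
    have htri2 : G.dist m v ≤ G.dist m (q.getVert (D - t)) + G.dist (q.getVert (D - t)) v :=
      hG.dist_triangle
    have hqv' : G.dist (q.getVert (D - t)) v = G.dist b v - (D - t) := by omega
    have hc : (G.dist (q.getVert (D - t)) v : ℝ) = (G.dist b v : ℝ) - ((D - t : ℕ) : ℝ) := by
      rw [hqv', Nat.cast_sub htbv]
    calc (G.dist m v : ℝ)
        ≤ (G.dist m (q.getVert (D - t)) : ℝ) + (G.dist (q.getVert (D - t)) v : ℝ) := by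
          exact_mod_cast htri2
      _ = (G.dist m (q.getVert (D - t)) : ℝ) + ((G.dist b v : ℝ) - ((D - t : ℕ) : ℝ)) := by
          rw [hc]
      _ ≤ (G.dist b v : ℝ) - ((D - t : ℕ) : ℝ) + δ := by linarith

/-- For every vertex `x` of a graph with δ-thin triangles,
`d(x, C(G)) + rad(G) - 4δ - 2 ≤ ecc(x) ≤ d(x, C(G)) + rad(G)`. -/
theorem stmt_4 [Fintype V] (G : SimpleGraph V) (hG : G.Connected)
    (δ : ℝ) (hδ : 0 ≤ δ) (hthin : ThinTriangles G δ) (x : V) :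
    (distToCenter G x : ℝ) + (rad G : ℝ) - 4 * δ - 2 ≤ (ecc G x : ℝ) ∧
    (ecc G x : ℝ) ≤ (distToCenter G x : ℝ) + (rad G : ℝ) := by
  have : Nonempty V := ⟨x⟩
  -- a center vertex realizing distToCenter
  obtain ⟨c₀, hc₀⟩ := exists_center G
  have hSne : {n : ℕ | ∃ c : V, ecc G c = rad G ∧ G.dist x c = n}.Nonempty :=
    ⟨G.dist x c₀, c₀, hc₀, rfl⟩
  obtain ⟨c, hc_ecc, hc_dist⟩ :
      ∃ c : V, ecc G c = rad G ∧ G.dist x c = distToCenter G x :=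
    Nat.sInf_mem hSne
  -- Upper bound
  have hupper : (ecc G x : ℝ) ≤ (distToCenter G x : ℝ) + (rad G : ℝ) := by
    have h := ecc_le_dist_add G hG x c
    rw [hc_dist, hc_ecc] at h
    exact_mod_cast h
  refine ⟨?_, hupper⟩
  -- Lower bound: choose a diametral pair (a, b)
  obtain ⟨ab, -, hab⟩ :=
    Finset.exists_mem_eq_sup (Finset.univ : Finset (V × V)) Finset.univ_nonempty
      (fun pr => G.dist pr.1 pr.2)
  set a := ab.1
  set b := ab.2
  have hmax : ∀ u w : V, G.dist u w ≤ G.dist a b := by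
    intro u w
    have : G.dist u w ≤ Finset.univ.sup (fun pr : V × V => G.dist pr.1 pr.2) :=
      Finset.le_sup (f := fun pr : V × V => G.dist pr.1 pr.2)
        (Finset.mem_univ (u, w))
    omega
  obtain ⟨p, hp⟩ := (hG.preconnected a b).exists_walk_length_eq_dist
  set D := G.dist a b with hD
  set t := D / 2 with htdef
  set m := p.getVert t with hmdef
  have htD : t ≤ D := Nat.div_le_self _ _
  have htDt : D - t ≤ t + 1 := by omega
  have httDt : t ≤ D - t := by omega
  have key := key_lemma G hG δ hthin a b p hp
  -- Step 1: rad ≤ (D - t) + δ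
  obtain ⟨z, hz⟩ := exists_ecc G m
  have hrad1 : (rad G : ℝ) ≤ ((D - t : ℕ) : ℝ) + δ := by
    have hradm : (rad G : ℝ) ≤ (ecc G m : ℝ) := by
      exact_mod_cast rad_le_ecc G m
    rcases key z with h | h
    · have haz : G.dist a z ≤ D := hmax a z
      have ht' : (t : ℝ) ≤ ((D : ℕ) : ℝ) := by exact_mod_cast htD
      have hDt : ((D - t : ℕ) : ℝ) = (D : ℝ) - t := by
        rw [Nat.cast_sub htD]
      rw [hz] at h
      have : (G.dist a z : ℝ) ≤ (D : ℝ) := by exact_mod_cast haz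
      rw [hDt]
      linarith
    · have hbz : G.dist b z ≤ D := hmax b z
      have hDt : ((D - t : ℕ) : ℝ) = (D : ℝ) - t := by
        rw [Nat.cast_sub htD]
      have httDt' : (t : ℝ) ≤ ((D - t : ℕ) : ℝ) := by exact_mod_cast httDt
      rw [hz] at h
      have h1 : (G.dist b z : ℝ) ≤ (D : ℝ) := by exact_mod_cast hbz
      -- h : ecc ≤ dist b z - (D - t) + δ ≤ D - (D-t) + δ = t + δ ≤ (D - t) + δ
      have : (rad G : ℝ) ≤ (D : ℝ) - ((D - t : ℕ) : ℝ) + δ := by linarith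
      have h2 : (D : ℝ) - ((D - t : ℕ) : ℝ) = (t : ℝ) := by
        rw [Nat.cast_sub htD]; ring
      rw [h2] at this
      linarith
  -- Step 2: for any vertex v, ecc v ≥ dist m v + t - δ
  have hstep2 : ∀ v : V, (G.dist m v : ℝ) + (t : ℝ) - δ ≤ (ecc G v : ℝ) := by
    intro v
    have httDt' : (t : ℝ) ≤ ((D - t : ℕ) : ℝ) := by exact_mod_cast httDt
    rcases key v with h | h
    · have hav : (G.dist a v : ℝ) ≤ (ecc G v : ℝ) := by
        have := dist_le_ecc G v a
        rw [G.dist_comm] at this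
        exact_mod_cast this
      linarith
    · have hbv : (G.dist b v : ℝ) ≤ (ecc G v : ℝ) := by
        have := dist_le_ecc G v b
        rw [G.dist_comm] at this
        exact_mod_cast this
      linarith
  -- Step 3: dist m c ≤ rad - t + δ
  have hstep3 : (G.dist m c : ℝ) ≤ (rad G : ℝ) - (t : ℝ) + δ := by
    have := hstep2 c
    rw [hc_ecc] at this
    linarith
  -- Step 4: assemble
  have htri : (distToCenter G x : ℝ) ≤ (G.dist m x : ℝ) + (G.dist m c : ℝ) := by
    have h1 : G.dist x c ≤ G.dist x m + G.dist m c := hG.dist_triangle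
    have h2 : G.dist x m = G.dist m x := G.dist_comm
    rw [← hc_dist]
    exact_mod_cast (h2 ▸ h1)
  have hx := hstep2 x
  -- rad ≤ (D - t) + δ ≤ t + 1 + δ
  have hrad2 : (rad G : ℝ) ≤ (t : ℝ) + 1 + δ := by
    have : ((D - t : ℕ) : ℝ) ≤ (t : ℝ) + 1 := by exact_mod_cast htDt
    linarith
  linarith
end

section
/- Every finite connected graph G with δ-thin triangles admits an eccentricity (3δ+1)-approximating spanning tree, i.e., a spanning tree T of G such that ecc_G(v) ≤ ecc_T(v) ≤ ecc_G(v) + 3δ + 1 for every vertex v of G. -/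
/-!
Root a breadth-first search tree `T` at a vertex `c` of minimum eccentricity. Since `T` preserves
distances from `c`, `ecc_T(v) ≤ d(c, v) + ecc(c)`. Thin triangles bound the right-hand side: with
`k = ⌊δ⌋`, comparing `v` with a vertex farthest from the point at distance `k + 1` from `c` on a
geodesic to `v` gives `d(c, v) + ecc(c) ≤ ecc(v) + 2k + 1`.
-/

open SimpleGraph

variable {V : Type*}

namespace SimpleGraph

variable {G : SimpleGraph V}

namespace Walk

variable {x y u : V} {p : G.Walk x y}

lemma dist_add_dist_of_mem_support (hp : p.length = G.dist x y) (hu : u ∈ p.support) :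
    G.dist x u + G.dist u y = G.dist x y := by
  classical
  have hlen : (p.takeUntil u hu).length + (p.dropUntil u hu).length = p.length := by
    rw [← length_append, take_spec]
  have := dist_le (p.takeUntil u hu)
  have := dist_le (p.dropUntil u hu)
  have := (p.takeUntil u hu).reachable.dist_triangle_left y
  omega

lemma dist_getVert (hp : p.length = G.dist x y) {i : ℕ} (hi : i ≤ p.length) :
    G.dist x (p.getVert i) = i := by
  have := p.dist_add_dist_of_mem_support hp (p.getVert_mem_support i)
  have := dist_le (p.take i)
  have := dist_le (p.drop i)
  simp only [take_length, drop_length] at *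
  omega

end Walk

section ParentGraph

variable {c : V} {par : V → V} {rank : V → ℕ}

variable (c par) in
def parentGraph : SimpleGraph V :=
  fromRel fun a b => a ≠ c ∧ par a = b

lemma parentGraph_adj_par (hrank : ∀ a, a ≠ c → rank (par a) + 1 = rank a) {a : V}
    (ha : a ≠ c) : (parentGraph c par).Adj a (par a) := by
  refine (fromRel_adj _ _ _).2 ⟨fun h => ?_, Or.inl ⟨ha, rfl⟩⟩
  have := hrank a ha
  rw [← h] at this
  omega

lemma par_eq_of_parentGraph_adj (hrank : ∀ a, a ≠ c → rank (par a) + 1 = rank a) {a b : V}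
    (hab : (parentGraph c par).Adj a b) (hle : rank b ≤ rank a) : par a = b := by
  obtain ⟨-, ⟨-, h⟩ | ⟨hb, rfl⟩⟩ := (fromRel_adj _ _ _).1 hab
  · exact h
  · have := hrank b hb
    omega

lemma exists_parentGraph_walk_length_le (hrank : ∀ a, a ≠ c → rank (par a) + 1 = rank a)
    (a : V) : ∃ p : (parentGraph c par).Walk a c, p.length ≤ rank a := by
  induction hn : rank a using Nat.strong_induction_on generalizing a with
  | _ n ih =>
    by_cases ha : a = c
    · subst ha
      exact ⟨.nil, Nat.zero_le _⟩
    have hpar := hrank a ha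
    obtain ⟨p, hp⟩ := ih _ (by omega) (par a) rfl
    exact ⟨.cons (parentGraph_adj_par hrank ha) p, by simp only [Walk.length_cons]; omega⟩

/-- On a cycle, the vertex of largest rank would have two distinct neighbours of smaller or
equal rank, and both would have to be its parent. -/
lemma isAcyclic_parentGraph (hrank : ∀ a, a ≠ c → rank (par a) + 1 = rank a) :
    (parentGraph c par).IsAcyclic := by
  classical
  intro v q hq
  obtain ⟨u, hu, hmax⟩ := q.support.toFinset.exists_max_image rank ⟨v, by simp⟩
  rw [List.mem_toFinset] at hu
  have hq' := hq.rotate hu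
  have hpar : ∀ w ∈ (q.rotate u hu).support, (parentGraph c par).Adj u w → par u = w :=
    fun w hw huw => par_eq_of_parentGraph_adj hrank huw
      (hmax w (List.mem_toFinset.2 ((q.mem_support_rotate_iff u hu).1 hw)))
  have hnil := hq'.not_nil
  exact hq'.snd_ne_penultimate <|
    (hpar _ (Walk.getVert_mem_support _ _) (Walk.adj_snd hnil)).symm.trans
      (hpar _ (Walk.getVert_mem_support _ _) (Walk.adj_penultimate hnil).symm)

lemma isTree_parentGraph (hrank : ∀ a, a ≠ c → rank (par a) + 1 = rank a) :
    (parentGraph c par).IsTree := by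
  have : Nonempty V := ⟨c⟩
  refine ⟨⟨fun a b => ?_⟩, isAcyclic_parentGraph hrank⟩
  obtain ⟨p, -⟩ := exists_parentGraph_walk_length_le hrank a
  obtain ⟨q, -⟩ := exists_parentGraph_walk_length_le hrank b
  exact p.reachable.trans q.reachable.symm

end ParentGraph

lemma Connected.exists_adj_dist_add_one_eq (hG : G.Connected) {a c : V} (ha : a ≠ c) :
    ∃ b, G.Adj a b ∧ G.dist c b + 1 = G.dist c a := by
  obtain ⟨p, hp⟩ := hG.exists_walk_length_eq_dist a c
  have hnil : ¬ p.Nil := fun h => ha h.eq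
  refine ⟨p.snd, p.adj_snd hnil, ?_⟩
  have := dist_le p.tail
  have := (p.adj_snd hnil).reachable.dist_triangle_left c
  have := dist_eq_one_iff_adj.2 (p.adj_snd hnil)
  have := p.length_tail_add_one hnil
  rw [dist_comm (u := c), dist_comm (u := c)]
  omega

lemma Connected.exists_isTree_le_dist_eq (hG : G.Connected) (c : V) :
    ∃ T ≤ G, T.IsTree ∧ ∀ a, T.dist c a = G.dist c a := by
  choose! par hpar using fun a (ha : a ≠ c) => hG.exists_adj_dist_add_one_eq ha
  have hrank a (ha : a ≠ c) := (hpar a ha).2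
  have hle : parentGraph c par ≤ G := by
    intro a b hab
    obtain ⟨-, ⟨ha, rfl⟩ | ⟨hb, rfl⟩⟩ := (fromRel_adj _ _ _).1 hab
    · exact (hpar a ha).1
    · exact (hpar b hb).1.symm
  have hT := isTree_parentGraph hrank
  refine ⟨parentGraph c par, hle, hT, fun a => le_antisymm ?_ ((hT.connected c a).dist_anti hle)⟩
  obtain ⟨p, hp⟩ := exists_parentGraph_walk_length_le hrank a
  rw [dist_comm]
  exact (dist_le p).trans hp

end SimpleGraph

section Eccentricity

variable [Fintype V] {G T : SimpleGraph V}

lemma dist_le_ecc_s12 (a b : V) : G.dist a b ≤ ecc G a :=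
  Finset.le_sup (f := fun u => G.dist a u) (Finset.mem_univ b)

lemma exists_dist_eq_ecc [Nonempty V] (a : V) : ∃ b, G.dist a b = ecc G a := by
  obtain ⟨b, -, hb⟩ := Finset.exists_mem_eq_sup Finset.univ Finset.univ_nonempty
    (fun u => G.dist a u)
  exact ⟨b, hb.symm⟩

lemma ecc_le_ecc_of_le (hle : T ≤ G) (hT : T.Connected) (v : V) : ecc G v ≤ ecc T v :=
  Finset.sup_mono_fun fun u _ => (hT v u).dist_anti hle

lemma SimpleGraph.Connected.ecc_le_dist_add_ecc (hG : G.Connected) (v c : V) :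
    ecc G v ≤ G.dist v c + ecc G c :=
  Finset.sup_le fun u _ => hG.dist_triangle.trans (Nat.add_le_add_left (dist_le_ecc_s12 c u) _)

lemma ecc_eq_of_dist_eq {c : V} (h : ∀ a, T.dist c a = G.dist c a) : ecc T c = ecc G c := by
  simp only [ecc, h]

end Eccentricity

namespace ThinTriangles

variable {G : SimpleGraph V}

lemma natFloor {δ : ℝ} (h : ThinTriangles G δ) : ThinTriangles G ⌊δ⌋₊ :=
  fun x y z p q hp hq u hu u' hu' hxu hgromov => by
    exact_mod_cast Nat.le_floor (h x y z p q hp hq u hu u' hu' hxu hgromov)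

lemma dist_add_dist_le {k : ℕ} (h : ThinTriangles G k) (hG : G.Connected) {x y u : V}
    {p : G.Walk x y} (hp : p.length = G.dist x y) (hu : u ∈ p.support) (z : V)
    (hgromov : 2 * G.dist x u + G.dist y z ≤ G.dist x y + G.dist x z) :
    G.dist u z + G.dist x u ≤ G.dist x z + k := by
  obtain ⟨q, hq⟩ := hG.exists_walk_length_eq_dist x z
  have : G.dist x y ≤ G.dist x z + G.dist z y := hG.dist_triangle
  have hi : G.dist x u ≤ q.length := by
    rw [dist_comm (u := z)] at this
    omega
  set u' := q.getVert (G.dist x u)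
  have hu' : u' ∈ q.support := q.getVert_mem_support _
  have hxu' : G.dist x u' = G.dist x u := q.dist_getVert hq hi
  have huu' : G.dist u u' ≤ k := by
    exact_mod_cast h x y z p q hp hq u hu u' hu' hxu'.symm hgromov
  have := q.dist_add_dist_of_mem_support hq hu'
  have : G.dist u z ≤ G.dist u u' + G.dist u' z := hG.dist_triangle
  omega

/-- Let `m` be the vertex at distance `k + 1` from `c` on a geodesic to `v`, and `w` a vertex
farthest from `m`. If `d(c, m) ≤ (v|w)_c`, thinness at `c` gives `d(m, w) < d(c, w) ≤ ecc c`,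
contradicting `ecc c ≤ ecc m`. Otherwise `d(v, m) ≤ (c|w)_v`, and thinness at `v` gives
`ecc c ≤ d(m, w) ≤ d(v, w) - d(v, m) + k`. -/
lemma dist_add_ecc_le [Fintype V] {k : ℕ} (h : ThinTriangles G k) (hG : G.Connected) {c : V}
    (hc : ∀ u, ecc G c ≤ ecc G u) (v : V) : G.dist c v + ecc G c ≤ ecc G v + 2 * k + 1 := by
  have := hG.nonempty
  by_cases hnear : G.dist c v ≤ k
  · have := hc v
    omega
  obtain ⟨P, hP⟩ := hG.exists_walk_length_eq_dist c v
  set m := P.getVert (k + 1)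
  have hcm : G.dist c m = k + 1 := P.dist_getVert hP (by omega)
  have hm : m ∈ P.support := P.getVert_mem_support _
  have hmv := P.dist_add_dist_of_mem_support hP hm
  obtain ⟨w, hw⟩ := exists_dist_eq_ecc (G := G) m
  have := dist_le_ecc_s12 (G := G) c w
  have := hc m
  by_cases hfar : 2 * (k + 1) + G.dist v w ≤ G.dist c v + G.dist c w
  · have := h.dist_add_dist_le hG hP hm w (by omega)
    omega
  have hm' : m ∈ P.reverse.support := by simpa using hm
  have hP' : P.reverse.length = G.dist v c := by simp [hP, dist_comm]
  have hthin := h.dist_add_dist_le hG hP' hm' w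
    (by rw [dist_comm (u := v), dist_comm (u := v)]; omega)
  rw [dist_comm (u := v) (v := m)] at hthin
  have := dist_le_ecc_s12 (G := G) v w
  omega

lemma exists_isTree_le_ecc_le [Fintype V] {k : ℕ} (h : ThinTriangles G k) (hG : G.Connected) :
    ∃ T ≤ G, T.IsTree ∧ ∀ v, ecc G v ≤ ecc T v ∧ ecc T v ≤ ecc G v + 2 * k + 1 := by
  have := hG.nonempty
  obtain ⟨c, hc⟩ := Finite.exists_min (ecc G)
  obtain ⟨T, hTG, hT, hTc⟩ := hG.exists_isTree_le_dist_eq c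
  refine ⟨T, hTG, hT, fun v => ⟨ecc_le_ecc_of_le hTG hT.connected v, ?_⟩⟩
  calc ecc T v ≤ T.dist v c + ecc T c := hT.connected.ecc_le_dist_add_ecc v c
    _ = G.dist c v + ecc G c := by rw [dist_comm, hTc, ecc_eq_of_dist_eq hTc]
    _ ≤ ecc G v + 2 * k + 1 := h.dist_add_ecc_le hG hc v

end ThinTriangles

/-- Every finite connected graph with δ-thin triangles admits an
eccentricity `(3δ+1)`-approximating spanning tree. -/
theorem stmt_12 [Fintype V] (G : SimpleGraph V) (hG : G.Connected)
    (δ : ℝ) (hδ : 0 ≤ δ) (hthin : ThinTriangles G δ) :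
    ∃ T : SimpleGraph V, T ≤ G ∧ T.IsTree ∧
      ∀ v : V, ecc G v ≤ ecc T v ∧ (ecc T v : ℝ) ≤ (ecc G v : ℝ) + 3 * δ + 1 := by
  obtain ⟨T, hTG, hT, hecc⟩ := hthin.natFloor.exists_isTree_le_ecc_le hG
  refine ⟨T, hTG, hT, fun v => ⟨(hecc v).1, ?_⟩⟩
  have hk : (⌊δ⌋₊ : ℝ) ≤ δ := Nat.floor_le hδ
  calc (ecc T v : ℝ) ≤ ecc G v + 2 * ⌊δ⌋₊ + 1 := by exact_mod_cast (hecc v).2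
    _ ≤ ecc G v + 3 * δ + 1 := by linarith
end
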